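/- arXiv:2212.00392 — 2 statements merged into one kernel-verified Lean document; each statement's English description precedes it below -/
import Mathlib

section
/- Let Z be an integrable real-valued random variable on a probability space (Ω, 𝔽, P) with cumulative distribution function F(z) = P(Z ≤ z), and let α ∈ (0,1). Define VaR_α(Z) := inf{ z ∈ ℝ : F(z) ≥ 1 − α }. Then the infimum in the definition of CVaR is attained at s = VaR_α(Z); that is, inf_{s ∈ ℝ} ( s + α⁻¹ E[max(Z − s, 0)] ) = VaR_α(Z) + α⁻¹ E[max(Z − VaR_α(Z), 0)]. -/
/-!
Push `Z` forward to its law `μ` on `ℝ`, so that `F` becomes `cdf μ` and the objective becomes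
`s + α⁻¹ ∫ (x - s)⁺ dμ`. For each `x`, the function `t ↦ (x - t)⁺` is convex and `-𝟙_A(x)` is a
subgradient of it at `v` whenever `Ioi v ⊆ A ⊆ Ici v`. Integrating the subgradient inequality with
`A = Ioi v` and with `A = Ici v` shows that `v` minimizes the objective as soon as
`μ (Ioi v) ≤ α ≤ μ (Ici v)`. Right continuity of `F` gives the first bound at `v = VaR_α`, and
`F(z) < 1 - α` for `z < VaR_α` gives the second.
-/

open MeasureTheory Filter Topology Set ProbabilityTheory

noncomputable def valueAtRisk (μ : Measure ℝ) (α : ℝ) : ℝ := sInf {z | 1 - α ≤ cdf μ z}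

noncomputable def cvarObjective (μ : Measure ℝ) (α s : ℝ) : ℝ :=
  s + α⁻¹ * ∫ x, max (x - s) 0 ∂μ

lemma StieltjesFunction.le_apply_sInf_setOf_le (f : StieltjesFunction ℝ) {c : ℝ}
    (hne : {z | c ≤ f z}.Nonempty) : c ≤ f (sInf {z | c ≤ f z}) := by
  refine ge_of_tendsto ((f.right_continuous _).mono Ioi_subset_Ici_self) ?_
  filter_upwards [self_mem_nhdsWithin] with z hz
  obtain ⟨y, hy, hyz⟩ := exists_lt_of_csInf_lt hne hz
  exact hy.trans (f.mono hyz.le)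

lemma Monotone.leftLim_sInf_setOf_le_le {f : ℝ → ℝ} (hf : Monotone f) {c : ℝ}
    (hbdd : BddBelow {z | c ≤ f z}) : Function.leftLim f (sInf {z | c ≤ f z}) ≤ c := by
  refine _root_.le_of_tendsto (hf.tendsto_leftLim _) ?_
  filter_upwards [self_mem_nhdsWithin] with z hz
  exact (not_le.1 (notMem_of_lt_csInf (s := {z | c ≤ f z}) hz hbdd)).le

lemma nonempty_setOf_le_cdf (μ : Measure ℝ) {c : ℝ} (hc : c < 1) :
    {z | c ≤ cdf μ z}.Nonempty :=
  ((tendsto_cdf_atTop μ).eventually (eventually_ge_nhds hc)).exists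

lemma bddBelow_setOf_le_cdf (μ : Measure ℝ) {c : ℝ} (hc : 0 < c) :
    BddBelow {z | c ≤ cdf μ z} := by
  obtain ⟨b, hb⟩ := eventually_atBot.1 ((tendsto_cdf_atBot μ).eventually (eventually_lt_nhds hc))
  exact ⟨b, fun z hz => le_of_not_ge fun hzb => (hb z hzb).not_ge hz⟩

lemma measureReal_Ioi_valueAtRisk_le (μ : Measure ℝ) [IsProbabilityMeasure μ] {α : ℝ}
    (hα : 0 < α) : μ.real (Ioi (valueAtRisk μ α)) ≤ α := by
  have hF := (cdf μ).le_apply_sInf_setOf_le (nonempty_setOf_le_cdf μ (c := 1 - α) (by linarith))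
  rw [← compl_Iic, probReal_compl_eq_one_sub measurableSet_Iic, ← cdf_eq_real, valueAtRisk]
  linarith

lemma le_measureReal_Ici_valueAtRisk (μ : Measure ℝ) [IsProbabilityMeasure μ] {α : ℝ}
    (hα : α < 1) : α ≤ μ.real (Ici (valueAtRisk μ α)) := by
  have hF := (monotone_cdf μ).leftLim_sInf_setOf_le_le
    (bddBelow_setOf_le_cdf μ (c := 1 - α) (by linarith))
  have hIio : μ.real (Iio (valueAtRisk μ α)) ≤ 1 - α := by
    have h := (cdf μ).measure_Iio (tendsto_cdf_atBot μ) (valueAtRisk μ α)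
    rw [measure_cdf, sub_zero] at h
    exact ENNReal.toReal_le_of_le_ofReal (by linarith) (h.trans_le (ENNReal.ofReal_le_ofReal hF))
  rw [← compl_Iio, probReal_compl_eq_one_sub measurableSet_Iio]
  linarith

lemma posPart_sub_add_indicator_le {A : Set ℝ} {v : ℝ} (hA : Ioi v ⊆ A) (hA' : A ⊆ Ici v)
    (s x : ℝ) : max (x - v) 0 + A.indicator (fun _ => v - s) x ≤ max (x - s) 0 := by
  by_cases hx : x ∈ A
  · have hvx : v ≤ x := hA' hx
    rw [indicator_of_mem hx, max_eq_left (by linarith)]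
    exact le_max_of_le_left (by linarith)
  · have hxv : x ≤ v := le_of_not_gt fun h => hx (hA h)
    rw [indicator_of_notMem hx, max_eq_right (by linarith), add_zero]
    exact le_max_right _ _

lemma integral_posPart_sub_add_le (μ : Measure ℝ) [IsFiniteMeasure μ] (hμ : Integrable id μ)
    {A : Set ℝ} {v : ℝ} (hAm : MeasurableSet A) (hA : Ioi v ⊆ A) (hA' : A ⊆ Ici v) (s : ℝ) :
    ∫ x, max (x - v) 0 ∂μ + (v - s) * μ.real A ≤ ∫ x, max (x - s) 0 ∂μ := by
  have hint (t : ℝ) : Integrable (fun x => max (x - t) 0) μ :=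
    (hμ.sub (integrable_const t)).pos_part
  have hind : Integrable (A.indicator fun _ => v - s) μ := (integrable_const _).indicator hAm
  calc ∫ x, max (x - v) 0 ∂μ + (v - s) * μ.real A
      = ∫ x, (max (x - v) 0 + A.indicator (fun _ => v - s) x) ∂μ := by
        rw [integral_add (hint v) hind, integral_indicator_const _ hAm, smul_eq_mul, mul_comm]
    _ ≤ ∫ x, max (x - s) 0 ∂μ :=
        integral_mono ((hint v).add hind) (hint s) (posPart_sub_add_indicator_le hA hA' s)

lemma cvarObjective_le_of_tails (μ : Measure ℝ) [IsFiniteMeasure μ] (hμ : Integrable id μ)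
    {α v : ℝ} (hα : 0 < α) (hIoi : μ.real (Ioi v) ≤ α) (hIci : α ≤ μ.real (Ici v)) (s : ℝ) :
    cvarObjective μ α v ≤ cvarObjective μ α s := by
  have key : α * v + ∫ x, max (x - v) 0 ∂μ ≤ α * s + ∫ x, max (x - s) 0 ∂μ := by
    rcases le_total v s with hvs | hsv
    · have h := integral_posPart_sub_add_le μ hμ (measurableSet_Ioi (a := v)) subset_rfl
        Ioi_subset_Ici_self s
      nlinarith [mul_nonneg (sub_nonneg.2 hvs) (sub_nonneg.2 hIoi)]
    · have h := integral_posPart_sub_add_le μ hμ (measurableSet_Ici (a := v))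
        Ioi_subset_Ici_self subset_rfl s
      nlinarith [mul_nonneg (sub_nonneg.2 hsv) (sub_nonneg.2 hIci)]
  have hscale (t : ℝ) : cvarObjective μ α t = α⁻¹ * (α * t + ∫ x, max (x - t) 0 ∂μ) := by
    rw [cvarObjective, mul_add, inv_mul_cancel_left₀ hα.ne']
  rw [hscale, hscale]
  exact mul_le_mul_of_nonneg_left key (inv_nonneg.2 hα.le)

/-- The infimum in the definition of `CVaR_α` is attained at `s = VaR_α(Z)`,
where `VaR_α(Z) = inf { z : F(z) ≥ 1 - α }` and `F` is the cumulative
distribution function of `Z`. -/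
theorem cvar_inf_attained_at_var
    {Ω : Type*} [MeasurableSpace Ω] (P : Measure Ω) [IsProbabilityMeasure P]
    (Z : Ω → ℝ) (hZ : Integrable Z P) (α : ℝ) (hα : α ∈ Set.Ioo (0 : ℝ) 1)
    (VaR : ℝ) (hVaR : VaR = sInf {z : ℝ | (1 : ℝ) - α ≤ (P {ω | Z ω ≤ z}).toReal}) :
    (⨅ s : ℝ, (s + α⁻¹ * ∫ ω, max (Z ω - s) 0 ∂P))
      = VaR + α⁻¹ * ∫ ω, max (Z ω - VaR) 0 ∂P := by
  set μ := P.map Z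
  have : IsProbabilityMeasure μ := Measure.isProbabilityMeasure_map hZ.aemeasurable
  have hμ : Integrable id μ := (integrable_map_measure aestronglyMeasurable_id hZ.aemeasurable).2 hZ
  have hobj (s : ℝ) : s + α⁻¹ * ∫ ω, max (Z ω - s) 0 ∂P = cvarObjective μ α s := by
    rw [cvarObjective, integral_map hZ.aemeasurable
      (by fun_prop : Continuous fun x : ℝ => max (x - s) 0).aestronglyMeasurable]
  have hcdf (z : ℝ) : (P {ω | Z ω ≤ z}).toReal = cdf μ z := by
    rw [cdf_eq_real, measureReal_def,
      Measure.map_apply_of_aemeasurable hZ.aemeasurable measurableSet_Iic]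
    rfl
  have hVaR' : VaR = valueAtRisk μ α := by simp only [hVaR, hcdf, valueAtRisk]
  have hmin (s : ℝ) : cvarObjective μ α VaR ≤ cvarObjective μ α s := by
    rw [hVaR']
    exact cvarObjective_le_of_tails μ hμ hα.1 (measureReal_Ioi_valueAtRisk_le μ hα.1)
      (le_measureReal_Ici_valueAtRisk μ hα.2) s
  simp only [hobj]
  exact ciInf_eq_of_forall_ge_of_forall_gt_exists_lt hmin fun _ hw => ⟨VaR, hw⟩
end

section
/- Fix n ∈ ℕ, a positive semidefinite matrix P ∈ ℝⁿˣⁿ, a positive semidefinite matrix Σ ∈ ℝⁿˣⁿ, and a risk level α ∈ (0,1). Let 𝒫 be the set of probability measures μ on ℝⁿ with finite second moments satisfying ∫ e dμ = 0 and ∫ e eᵀ dμ = Σ. Then the worst-case Conditional Value-at-Risk of the quadratic cost f(e) = eᵀ P e over 𝒫 equals α⁻¹ Tr(Σ P); that is, sup_{μ ∈ 𝒫} inf_{s ∈ ℝ} ( s + α⁻¹ ∫ max(eᵀ P e − s, 0) dμ(e) ) = α⁻¹ Tr(Σ P). -/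
open MeasureTheory Matrix

/-- The Conditional Value-at-Risk of `Z` at level `α` under the measure `μ`:
`CVaR_α^μ(Z) = inf_{s ∈ ℝ} ( s + α⁻¹ ∫ max(Z − s, 0) dμ )`. -/
noncomputable def cvar {Ω : Type*} [MeasurableSpace Ω]
    (μ : Measure Ω) (α : ℝ) (Z : Ω → ℝ) : ℝ :=
  ⨅ s : ℝ, (s + α⁻¹ * ∫ ω, max (Z ω - s) 0 ∂μ)

/-- The moment-based ambiguity set of probability measures on `ℝⁿ` with finite
second moments, zero mean, and second moment matrix `S`. -/
def momentSet (n : ℕ) (S : Matrix (Fin n) (Fin n) ℝ) :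
    Set (Measure (Fin n → ℝ)) :=
  {μ | IsProbabilityMeasure μ ∧ Integrable (fun e => ‖e‖ ^ 2) μ ∧
    (∫ e, e ∂μ) = 0 ∧ ∀ i j, ∫ e, e i * e j ∂μ = S i j}

/-!
The cost `Z e = eᵀPe` is nonnegative, so the choice `s = 0` bounds every CVaR by
`α⁻¹ 𝔼[Z] = α⁻¹ Tr(SP)`. The bound is attained by the mixture `μ = (1 - α) δ₀ + α ν` with
`ν = N(0, α⁻¹ S)`: since `μ ≥ α ν`, every `s` gives
`s + α⁻¹ 𝔼_μ (Z - s)⁺ ≥ s + 𝔼_ν (Z - s)⁺ ≥ 𝔼_ν Z = α⁻¹ Tr(SP)`.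
-/

open ProbabilityTheory Set

lemma integral_ofReal_smul_add_ofReal_smul {E : Type*} [NormedAddCommGroup E] [NormedSpace ℝ E]
    {Ω : Type*} [MeasurableSpace Ω] {μ₁ μ₂ : Measure Ω} {f : Ω → E} {a b : ℝ}
    (ha : 0 ≤ a) (hb : 0 ≤ b) (h₁ : Integrable f μ₁) (h₂ : Integrable f μ₂) :
    ∫ ω, f ω ∂(ENNReal.ofReal a • μ₁ + ENNReal.ofReal b • μ₂)
      = a • ∫ ω, f ω ∂μ₁ + b • ∫ ω, f ω ∂μ₂ := by
  rw [integral_add_measure (h₁.smul_measure ENNReal.ofReal_ne_top)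
    (h₂.smul_measure ENNReal.ofReal_ne_top), integral_smul_measure, integral_smul_measure,
    ENNReal.toReal_ofReal ha, ENNReal.toReal_ofReal hb]

section CVaR

variable {Ω : Type*} [MeasurableSpace Ω] {μ ν : Measure Ω} {α : ℝ} {Z : Ω → ℝ}

lemma integral_le_add_integral_max_sub [IsProbabilityMeasure μ] (hZ : Integrable Z μ) (s : ℝ) :
    ∫ ω, Z ω ∂μ ≤ s + ∫ ω, max (Z ω - s) 0 ∂μ :=
  calc ∫ ω, Z ω ∂μ = s + ∫ ω, (Z ω - s) ∂μ := by
        rw [integral_sub hZ (integrable_const s)]; simp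
    _ ≤ s + ∫ ω, max (Z ω - s) 0 ∂μ :=
        (add_le_add_iff_left s).2 <| integral_mono (hZ.sub (integrable_const s))
          (hZ.sub (integrable_const s)).pos_part fun ω => le_max_left _ _

lemma integral_le_cvar_objective [IsProbabilityMeasure μ] (hα₀ : 0 < α) (hα₁ : α ≤ 1)
    (hZ : Integrable Z μ) (s : ℝ) :
    ∫ ω, Z ω ∂μ ≤ s + α⁻¹ * ∫ ω, max (Z ω - s) 0 ∂μ := by
  refine (integral_le_add_integral_max_sub hZ s).trans ?_
  gcongr
  exact le_mul_of_one_le_left (integral_nonneg fun ω => le_max_right _ _)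
    (one_le_inv₀ hα₀ |>.2 hα₁)

lemma cvar_le_inv_mul_integral [IsProbabilityMeasure μ] (hα₀ : 0 < α) (hα₁ : α ≤ 1)
    (hZ : Integrable Z μ) (hZ₀ : 0 ≤ᵐ[μ] Z) :
    cvar μ α Z ≤ α⁻¹ * ∫ ω, Z ω ∂μ := by
  have hbdd : BddBelow (range fun s => s + α⁻¹ * ∫ ω, max (Z ω - s) 0 ∂μ) :=
    ⟨∫ ω, Z ω ∂μ, forall_mem_range.2 (integral_le_cvar_objective hα₀ hα₁ hZ)⟩
  calc cvar μ α Z ≤ 0 + α⁻¹ * ∫ ω, max (Z ω - 0) 0 ∂μ := ciInf_le hbdd 0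
    _ = α⁻¹ * ∫ ω, Z ω ∂μ := by
        rw [zero_add]
        congr 1
        exact integral_congr_ae (hZ₀.mono fun ω h => by simpa using h)

lemma integral_le_cvar_of_smul_le [IsFiniteMeasure μ] [IsProbabilityMeasure ν] (hα₀ : 0 < α)
    (hle : ENNReal.ofReal α • ν ≤ μ) (hZ : Integrable Z μ) :
    ∫ ω, Z ω ∂ν ≤ cvar μ α Z := by
  have hZν : Integrable Z ν :=
    (integrable_smul_measure (by simpa using hα₀) ENNReal.ofReal_ne_top).1 (hZ.mono_measure hle)
  refine le_ciInf fun s => ?_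
  calc ∫ ω, Z ω ∂ν ≤ s + ∫ ω, max (Z ω - s) 0 ∂ν := integral_le_add_integral_max_sub hZν s
    _ = s + α⁻¹ * ∫ ω, max (Z ω - s) 0 ∂(ENNReal.ofReal α • ν) := by
        rw [integral_smul_measure, ENNReal.toReal_ofReal hα₀.le, smul_eq_mul,
          inv_mul_cancel_left₀ hα₀.ne']
    _ ≤ s + α⁻¹ * ∫ ω, max (Z ω - s) 0 ∂μ := by
        have := integral_mono_measure hle (ae_of_all _ fun ω => le_max_right (Z ω - s) 0)
          (hZ.sub (integrable_const s)).pos_part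
        gcongr

end CVaR

section momentSet

variable {n : ℕ} {S S₁ S₂ : Matrix (Fin n) (Fin n) ℝ} {μ μ₁ μ₂ : Measure (Fin n → ℝ)}

lemma memLp_id_of_mem_momentSet (hμ : μ ∈ momentSet n S) : MemLp id 2 μ :=
  (memLp_two_iff_integrable_sq_norm aestronglyMeasurable_id).2 hμ.2.1

lemma integrable_id_of_mem_momentSet (hμ : μ ∈ momentSet n S) : Integrable (fun e => e) μ :=
  have := hμ.1
  (memLp_id_of_mem_momentSet hμ).integrable one_le_two

lemma integrable_mul_apply_of_mem_momentSet (hμ : μ ∈ momentSet n S) (i j : Fin n) :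
    Integrable (fun e => e i * e j) μ :=
  ((memLp_id_of_mem_momentSet hμ).eval i).integrable_mul ((memLp_id_of_mem_momentSet hμ).eval j)

lemma ofReal_smul_add_ofReal_smul_mem_momentSet {p : ℝ} (hp₀ : 0 ≤ p) (hp₁ : p ≤ 1)
    (hμ₁ : μ₁ ∈ momentSet n S₁) (hμ₂ : μ₂ ∈ momentSet n S₂) :
    ENNReal.ofReal (1 - p) • μ₁ + ENNReal.ofReal p • μ₂ ∈ momentSet n ((1 - p) • S₁ + p • S₂) := by
  have hq : 0 ≤ 1 - p := sub_nonneg.2 hp₁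
  have := hμ₁.1
  have := hμ₂.1
  refine ⟨⟨?_⟩, ?_, ?_, fun i j => ?_⟩
  · simp [← ENNReal.ofReal_add hq hp₀]
  · exact (hμ₁.2.1.smul_measure ENNReal.ofReal_ne_top).add_measure
      (hμ₂.2.1.smul_measure ENNReal.ofReal_ne_top)
  · rw [integral_ofReal_smul_add_ofReal_smul hq hp₀ (integrable_id_of_mem_momentSet hμ₁)
      (integrable_id_of_mem_momentSet hμ₂), hμ₁.2.2.1, hμ₂.2.2.1, smul_zero, smul_zero, add_zero]
  · rw [integral_ofReal_smul_add_ofReal_smul hq hp₀ (integrable_mul_apply_of_mem_momentSet hμ₁ i j)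
      (integrable_mul_apply_of_mem_momentSet hμ₂ i j), hμ₁.2.2.2, hμ₂.2.2.2]
    rfl

lemma dirac_zero_mem_momentSet : Measure.dirac 0 ∈ momentSet n 0 :=
  ⟨inferInstance, integrable_dirac enorm_lt_top, by simp, fun i j => by simp⟩

lemma gaussian_mem_momentSet (hS : S.PosSemidef) :
    (multivariateGaussian 0 S).map (PiLp.continuousLinearEquiv 2 ℝ (fun _ : Fin n => ℝ))
      ∈ momentSet n S := by
  set L := PiLp.continuousLinearEquiv 2 ℝ (fun _ : Fin n => ℝ)
  set ν := (multivariateGaussian 0 S).map L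
  have hmean : ∫ e, e ∂ν = 0 := by simp [ν, L.integral_id_map]
  have hmean_apply (i : Fin n) : ∫ e, e i ∂ν = 0 := by
    simpa [hmean] using (ContinuousLinearMap.proj (R := ℝ) (φ := fun _ : Fin n => ℝ) i)
      |>.integral_comp_id_comm IsGaussian.integrable_id (μ := ν)
  refine ⟨inferInstance, ?_, hmean, fun i j => ?_⟩
  · exact (memLp_two_iff_integrable_sq_norm aestronglyMeasurable_id).1 IsGaussian.memLp_two_id
  · have hcov : cov[fun e => e i, fun e => e j; ν] = S i j := by
      rw [covariance_map (measurable_pi_apply i).aestronglyMeasurable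
        (measurable_pi_apply j).aestronglyMeasurable (by fun_prop)]
      exact covariance_eval_multivariateGaussian hS i j
    rw [covariance_eq_sub (IsGaussian.memLp_two_id.eval i) (IsGaussian.memLp_two_id.eval j),
      hmean_apply, hmean_apply] at hcov
    simpa using hcov

lemma dotProduct_mulVec_self_eq_sum (P : Matrix (Fin n) (Fin n) ℝ) (e : Fin n → ℝ) :
    e ⬝ᵥ P *ᵥ e = ∑ i, ∑ j, P i j * (e i * e j) := by
  simp only [dotProduct, mulVec, Finset.mul_sum]
  exact Finset.sum_congr rfl fun i _ => Finset.sum_congr rfl fun j _ => by ring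

lemma integrable_dotProduct_mulVec_of_mem_momentSet (hμ : μ ∈ momentSet n S)
    (P : Matrix (Fin n) (Fin n) ℝ) : Integrable (fun e => e ⬝ᵥ P *ᵥ e) μ := by
  simp_rw [dotProduct_mulVec_self_eq_sum]
  exact integrable_finsetSum _ fun i _ => integrable_finsetSum _ fun j _ =>
    (integrable_mul_apply_of_mem_momentSet hμ i j).const_mul (P i j)

lemma integral_dotProduct_mulVec_of_mem_momentSet (hμ : μ ∈ momentSet n S)
    (P : Matrix (Fin n) (Fin n) ℝ) : ∫ e, e ⬝ᵥ P *ᵥ e ∂μ = (S * P).trace := by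
  have hsymm (i j : Fin n) : S j i = S i j := by
    simp only [← hμ.2.2.2, mul_comm]
  have hint (i j : Fin n) : Integrable (fun e => P i j * (e i * e j)) μ :=
    (integrable_mul_apply_of_mem_momentSet hμ i j).const_mul (P i j)
  calc ∫ e, e ⬝ᵥ P *ᵥ e ∂μ = ∑ i, ∑ j, S j i * P i j := by
        simp_rw [dotProduct_mulVec_self_eq_sum]
        rw [integral_finsetSum _ fun i _ => integrable_finsetSum _ fun j _ => hint i j]
        refine Finset.sum_congr rfl fun i _ => ?_
        rw [integral_finsetSum _ fun j _ => hint i j]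
        refine Finset.sum_congr rfl fun j _ => ?_
        rw [integral_const_mul, hμ.2.2.2, hsymm, mul_comm]
    _ = (S * P).trace := by
        rw [Finset.sum_comm]; rfl

end momentSet

/-- The worst-case Conditional Value-at-Risk of the quadratic cost `eᵀ P e`
over the moment-based ambiguity set with zero mean and second moment `S`
equals `α⁻¹ Tr(S P)` (Lemma 3 of the paper). -/
theorem worst_case_cvar_quadratic
    (n : ℕ) (P S : Matrix (Fin n) (Fin n) ℝ)
    (hP : P.PosSemidef) (hS : S.PosSemidef)
    (α : ℝ) (hα : α ∈ Set.Ioo (0 : ℝ) 1) :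
    (⨆ μ : momentSet n S, cvar μ.1 α (fun e => e ⬝ᵥ P.mulVec e))
      = α⁻¹ * (S * P).trace := by
  obtain ⟨hα₀, hα₁⟩ := hα
  have hupper (μ : momentSet n S) : cvar μ.1 α (fun e => e ⬝ᵥ P *ᵥ e) ≤ α⁻¹ * (S * P).trace := by
    have := μ.2.1
    rw [← integral_dotProduct_mulVec_of_mem_momentSet μ.2 P]
    exact cvar_le_inv_mul_integral hα₀ hα₁.le (integrable_dotProduct_mulVec_of_mem_momentSet μ.2 P)
      (ae_of_all _ hP.dotProduct_mulVec_nonneg)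
  set ν := (multivariateGaussian 0 (α⁻¹ • S)).map
    (PiLp.continuousLinearEquiv 2 ℝ (fun _ : Fin n => ℝ))
  have hν : ν ∈ momentSet n (α⁻¹ • S) := gaussian_mem_momentSet (hS.smul (inv_nonneg.2 hα₀.le))
  set μ := ENNReal.ofReal (1 - α) • Measure.dirac 0 + ENNReal.ofReal α • ν
  have hμ : μ ∈ momentSet n S := by
    simpa [smul_smul, hα₀.ne'] using
      ofReal_smul_add_ofReal_smul_mem_momentSet hα₀.le hα₁.le dirac_zero_mem_momentSet hν
  have hlower : α⁻¹ * (S * P).trace ≤ cvar μ α (fun e => e ⬝ᵥ P *ᵥ e) := by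
    have := hμ.1
    have := hν.1
    calc α⁻¹ * (S * P).trace = ∫ e, e ⬝ᵥ P *ᵥ e ∂ν := by
          rw [integral_dotProduct_mulVec_of_mem_momentSet hν, smul_mul_assoc, trace_smul,
            smul_eq_mul]
      _ ≤ _ := integral_le_cvar_of_smul_le hα₀ (Measure.le_add_left le_rfl)
          (integrable_dotProduct_mulVec_of_mem_momentSet hμ P)
  have : Nonempty (momentSet n S) := ⟨⟨μ, hμ⟩⟩
  exact le_antisymm (ciSup_le hupper)
    (hlower.trans (le_ciSup ⟨_, forall_mem_range.2 hupper⟩ ⟨μ, hμ⟩))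
end
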